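/- arXiv:2203.05609 — 10 statements merged into one kernel-verified Lean document; each statement's English description precedes it below -/
import Mathlib

section
/- Let X be an approximate subring of a (not necessarily unital or commutative) ring. Then for every positive integer m, the set m(X^{≤ m}) — consisting of all sums of m elements, each of which is a product of at most m elements of X — is covered by finitely many additive translates of X (i.e. there is a finite set F with m(X^{≤ m}) ⊆ F + X). -/
open Pointwise

/-- A subset of a (not necessarily unital or commutative) ring is additively symmetric
if it contains `0` and `-X = X`. -/
def AddSymmetric {R : Type*} [NonUnitalRing R] (X : Set R) : Prop :=
  (0 : R) ∈ X ∧ -X = X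

/-- `X` is an approximate subring if it is additively symmetric and
`X·X ∪ (X+X) ⊆ F + X` for some finite subset `F` of the subring generated by `X`. -/
def IsApproxSubring {R : Type*} [NonUnitalRing R] (X : Set R) : Prop :=
  AddSymmetric X ∧ ∃ F : Set R, F.Finite ∧ F ⊆ (NonUnitalSubring.closure X : Set R) ∧
    X * X ∪ (X + X) ⊆ F + X

/-- `prodPow X n` is the set of products of `n+1` elements of `X` (so `X^{n+1}`). -/
def prodPow {R : Type*} [NonUnitalRing R] (X : Set R) : ℕ → Set R
  | 0 => X
  | n + 1 => prodPow X n * X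

/-- `prodLe X m = X^{≤ m}`: the set of products of at least one and at most `m` elements of `X`. -/
def prodLe {R : Type*} [NonUnitalRing R] (X : Set R) (m : ℕ) : Set R :=
  ⋃ k < m, prodPow X k

/-- `iterAdd A n` is the set of sums of `n+1` elements of `A`. -/
def iterAdd {R : Type*} [NonUnitalRing R] (A : Set R) : ℕ → Set R
  | 0 => A
  | n + 1 => iterAdd A n + A

/-!
Say that `X` finitely covers `A` if `A ⊆ F + X` for a finite `F` inside the ring generated by `X`.
Since `X + X` is covered, covered sets are closed under sums; since `-X = X`, under negation;
and they are closed under finite unions. For `g` in the ring generated by `X`, the set `g X` is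
covered, by induction on `g`: in the product case `a b X ⊆ a (G + X) ⊆ a G + a X`, where `a G`
is finite and again in the ring, which is why `F` is required to lie there. Hence `A X` is
covered whenever `A` is, so by induction every `X^k` is, and then so are `X^{≤ m}` and its
iterated sums.
-/

section

variable {R : Type*} [NonUnitalRing R]


def FinitelyCovers (X A : Set R) : Prop :=
  ∃ F : Set R, F.Finite ∧ F ⊆ NonUnitalSubring.closure X ∧ A ⊆ F + X

namespace FinitelyCovers

variable {X A B : Set R}

theorem mono (h : FinitelyCovers X B) (hAB : A ⊆ B) : FinitelyCovers X A :=
  let ⟨F, hF, hFX, hB⟩ := h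
  ⟨F, hF, hFX, hAB.trans hB⟩

theorem of_finite (h0 : (0 : R) ∈ X) (hA : A.Finite) (hAX : A ⊆ NonUnitalSubring.closure X) :
    FinitelyCovers X A :=
  ⟨A, hA, hAX, fun a ha => ⟨a, ha, 0, h0, add_zero a⟩⟩

theorem self : FinitelyCovers X X :=
  ⟨{0}, Set.finite_singleton 0, by simp [zero_mem],
    by rw [Set.singleton_zero, zero_add]⟩

theorem add (hA : FinitelyCovers X A) (hB : FinitelyCovers X B) (hXX : FinitelyCovers X (X + X)) :
    FinitelyCovers X (A + B) := by
  obtain ⟨F₀, hF₀, hF₀X, hXX⟩ := hXX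
  obtain ⟨F, hF, hFX, hA⟩ := hA
  obtain ⟨G, hG, hGX, hB⟩ := hB
  refine ⟨F + G + F₀, (hF.add hG).add hF₀, ?_, ?_⟩
  · rintro _ ⟨_, ⟨f, hf, g, hg, rfl⟩, f₀, hf₀, rfl⟩
    exact add_mem (add_mem (hFX hf) (hGX hg)) (hF₀X hf₀)
  · calc A + B ⊆ F + X + (G + X) := Set.add_subset_add hA hB
      _ = F + G + (X + X) := add_add_add_comm _ _ _ _
      _ ⊆ F + G + (F₀ + X) := Set.add_subset_add_left hXX
      _ = F + G + F₀ + X := (add_assoc _ _ _).symm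

theorem neg (hX : -X = X) (hA : FinitelyCovers X A) : FinitelyCovers X (-A) := by
  obtain ⟨F, hF, hFX, hA⟩ := hA
  refine ⟨-F, hF.neg, fun f hf => by simpa using neg_mem (hFX hf), ?_⟩
  calc -A ⊆ -(F + X) := Set.neg_subset_neg.2 hA
    _ = -F + X := by rw [neg_add, hX]

theorem biUnion {ι : Type*} {s : Set ι} {A : ι → Set R} (hs : s.Finite)
    (h : ∀ i ∈ s, FinitelyCovers X (A i)) : FinitelyCovers X (⋃ i ∈ s, A i) := by
  choose F hF hFX hA using h
  refine ⟨⋃ i, ⋃ hi : i ∈ s, F i hi, hs.biUnion' hF, ?_, ?_⟩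
  · exact Set.iUnion₂_subset hFX
  · refine Set.iUnion₂_subset fun i hi => (hA i hi).trans ?_
    exact Set.add_subset_add_right (Set.subset_iUnion₂ (s := fun i hi => F i hi) i hi)

end FinitelyCovers

namespace IsApproxSubring

variable {X : Set R} (hX : IsApproxSubring X)
include hX

theorem finitelyCovers_mul_self : FinitelyCovers X (X * X) :=
  let ⟨_, F, hF, hFX, hcov⟩ := hX
  ⟨F, hF, hFX, Set.subset_union_left.trans hcov⟩

theorem finitelyCovers_add_self : FinitelyCovers X (X + X) :=
  let ⟨_, F, hF, hFX, hcov⟩ := hX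
  ⟨F, hF, hFX, Set.subset_union_right.trans hcov⟩

theorem finitelyCovers_singleton_mul {g : R} (hg : g ∈ NonUnitalSubring.closure X) :
    FinitelyCovers X ({g} * X) := by
  obtain ⟨⟨h0, hneg⟩, -⟩ := id hX
  have hXX := hX.finitelyCovers_add_self
  induction hg using NonUnitalSubring.closure_induction with
  | mem x hx =>
    exact hX.finitelyCovers_mul_self.mono (Set.mul_subset_mul_right (by simpa using hx))
  | zero =>
    refine FinitelyCovers.self.mono ?_
    rintro _ ⟨_, rfl, x, -, rfl⟩
    simpa using h0
  | add a b _ _ iha ihb =>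
    refine (iha.add ihb hXX).mono ?_
    calc ({a + b} : Set R) * X = ({a} + {b}) * X := by rw [Set.singleton_add_singleton]
      _ ⊆ {a} * X + {b} * X := Set.add_mul_subset _ _ _
  | neg a _ iha =>
    rw [← Set.neg_singleton, neg_mul]
    exact iha.neg hneg
  | mul a b ha _ iha ihb =>
    obtain ⟨G, hG, hGX, hb⟩ := ihb
    have haG : FinitelyCovers X ({a} * G) := .of_finite h0 ((Set.finite_singleton a).mul hG)
      (by rintro _ ⟨_, rfl, y, hy, rfl⟩; exact mul_mem ha (hGX hy))
    refine (haG.add iha hXX).mono ?_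
    calc ({a * b} : Set R) * X = {a} * ({b} * X) := by rw [← Set.singleton_mul_singleton, mul_assoc]
      _ ⊆ {a} * (G + X) := Set.mul_subset_mul_left hb
      _ ⊆ {a} * G + {a} * X := Set.mul_add_subset _ _ _

theorem finitelyCovers_mul_right {A : Set R} (hA : FinitelyCovers X A) :
    FinitelyCovers X (A * X) := by
  obtain ⟨F, hF, hFX, hA⟩ := hA
  have hFX' : FinitelyCovers X (F * X) := by
    rw [← Set.iUnion_mul_left_image]
    simp_rw [← Set.singleton_mul]
    exact .biUnion hF fun g hg => hX.finitelyCovers_singleton_mul (hFX hg)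
  refine (hFX'.add hX.finitelyCovers_mul_self hX.finitelyCovers_add_self).mono ?_
  calc A * X ⊆ (F + X) * X := Set.mul_subset_mul_right hA
    _ ⊆ F * X + X * X := Set.add_mul_subset _ _ _

theorem finitelyCovers_prodPow (n : ℕ) : FinitelyCovers X (prodPow X n) := by
  induction n with
  | zero => exact .self
  | succ n ih => exact hX.finitelyCovers_mul_right ih

theorem finitelyCovers_prodLe (m : ℕ) : FinitelyCovers X (prodLe X m) :=
  .biUnion (Set.finite_Iio m) fun k _ => hX.finitelyCovers_prodPow k

end IsApproxSubring

theorem FinitelyCovers.iterAdd {X A : Set R} (hA : FinitelyCovers X A)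
    (hXX : FinitelyCovers X (X + X)) (n : ℕ) : FinitelyCovers X (iterAdd A n) := by
  induction n with
  | zero => exact hA
  | succ n ih => exact ih.add hA hXX

end

theorem approx_subring_sums_of_bounded_products_covered_general
    {R : Type*} [NonUnitalRing R] (X : Set R) (hX : IsApproxSubring X)
    (m : ℕ) :
    ∃ F : Set R, F.Finite ∧ iterAdd (prodLe X m) (m - 1) ⊆ F + X :=
  let ⟨F, hF, _, hcov⟩ :=
    (hX.finitelyCovers_prodLe m).iterAdd hX.finitelyCovers_add_self (m - 1)
  ⟨F, hF, hcov⟩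

/-- For an approximate subring `X` and `m ≥ 1`, the set `m(X^{≤ m})` of sums of `m`
elements each of which is a product of at most `m` elements of `X` is covered by
finitely many additive translates of `X`. -/
theorem approx_subring_sums_of_bounded_products_covered
    {R : Type*} [NonUnitalRing R] (X : Set R) (hX : IsApproxSubring X)
    (m : ℕ) (hm : 0 < m) :
    ∃ F : Set R, F.Finite ∧ iterAdd (prodLe X m) (m - 1) ⊆ F + X :=
  approx_subring_sums_of_bounded_products_covered_general X hX m
end

section
/- Let X be an approximate subring of a ring and ⟨X⟩ the subring it generates. Then for every element x of ⟨X⟩, the set x·X := {x·y : y ∈ X} is covered by finitely many additive translates of X. -/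
/-! The elements `x` for which `x·X` is covered by finitely many translates of `X` form a
non-unital subring as soon as `X` is an approximate subring: sums are handled by
`X + X ⊆ F + X`, products by covering `a·(b·X)` in two steps, and `X` itself lies in it because
`X·X ⊆ F + X`. Hence this subring contains `⟨X⟩`. -/

open Pointwise

section CoveringMultipliers

variable {R : Type*} [NonUnitalRing R] {X F : Set R} {a b : R}

def coveringMultipliers (X : Set R) : Set R :=
  {x | ∃ F : Set R, F.Finite ∧ (fun y => x * y) '' X ⊆ F + X}

theorem subset_coveringMultipliers (hF : F.Finite) (hmul : X * X ⊆ F + X) :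
    X ⊆ coveringMultipliers X := by
  intro a ha
  refine ⟨F, hF, ?_⟩
  rintro _ ⟨y, hy, rfl⟩
  exact hmul (Set.mul_mem_mul ha hy)

theorem zero_mem_coveringMultipliers (h0 : (0 : R) ∈ X) : (0 : R) ∈ coveringMultipliers X := by
  refine ⟨{0}, Set.finite_singleton 0, ?_⟩
  rintro _ ⟨y, -, rfl⟩
  exact ⟨0, rfl, 0, h0, by simp⟩

theorem neg_mem_coveringMultipliers (hneg : -X = X) (ha : a ∈ coveringMultipliers X) :
    -a ∈ coveringMultipliers X := by
  obtain ⟨F, hF, hcover⟩ := ha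
  refine ⟨F, hF, ?_⟩
  rintro _ ⟨y, hy, rfl⟩
  have hy' : -y ∈ X := by rwa [← hneg, Set.neg_mem_neg]
  simpa only [neg_mul, mul_neg] using hcover ⟨-y, hy', rfl⟩

theorem add_mem_coveringMultipliers (hF : F.Finite) (hadd : X + X ⊆ F + X)
    (ha : a ∈ coveringMultipliers X) (hb : b ∈ coveringMultipliers X) :
    a + b ∈ coveringMultipliers X := by
  obtain ⟨Fa, hFa, hcover_a⟩ := ha
  obtain ⟨Fb, hFb, hcover_b⟩ := hb
  refine ⟨Fa + Fb + F, (hFa.add hFb).add hF, ?_⟩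
  rintro _ ⟨y, hy, rfl⟩
  obtain ⟨fa, hfa, u, hu, hay⟩ := hcover_a ⟨y, hy, rfl⟩
  obtain ⟨fb, hfb, v, hv, hby⟩ := hcover_b ⟨y, hy, rfl⟩
  obtain ⟨f, hf, w, hw, huv⟩ := hadd (Set.add_mem_add hu hv)
  refine ⟨fa + fb + f, Set.add_mem_add (Set.add_mem_add hfa hfb) hf, w, hw, ?_⟩
  simp only at hay hby huv ⊢
  rw [add_mul, ← hay, ← hby, add_assoc (fa + fb), huv]
  abel

theorem mul_mem_coveringMultipliers (ha : a ∈ coveringMultipliers X)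
    (hb : b ∈ coveringMultipliers X) : a * b ∈ coveringMultipliers X := by
  obtain ⟨Fa, hFa, hcover_a⟩ := ha
  obtain ⟨Fb, hFb, hcover_b⟩ := hb
  refine ⟨(fun f => a * f) '' Fb + Fa, (hFb.image _).add hFa, ?_⟩
  rintro _ ⟨y, hy, rfl⟩
  obtain ⟨fb, hfb, u, hu, hby⟩ := hcover_b ⟨y, hy, rfl⟩
  obtain ⟨fa, hfa, v, hv, hau⟩ := hcover_a ⟨u, hu, rfl⟩
  refine ⟨a * fb + fa, Set.add_mem_add ⟨fb, hfb, rfl⟩ hfa, v, hv, ?_⟩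
  simp only at hby hau ⊢
  rw [mul_assoc, ← hby, mul_add, ← hau, add_assoc]

def IsApproxSubring.coveringMultipliersSubring (hX : IsApproxSubring X) : NonUnitalSubring R where
  carrier := coveringMultipliers X
  zero_mem' := zero_mem_coveringMultipliers hX.1.1
  neg_mem' := neg_mem_coveringMultipliers hX.1.2
  add_mem' := by
    obtain ⟨-, F, hF, -, hcover⟩ := hX
    exact add_mem_coveringMultipliers hF (Set.union_subset_iff.1 hcover).2
  mul_mem' := mul_mem_coveringMultipliers

theorem IsApproxSubring.subset_coveringMultipliersSubring (hX : IsApproxSubring X) :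
    X ⊆ hX.coveringMultipliersSubring := by
  obtain ⟨-, F, hF, -, hcover⟩ := hX
  exact subset_coveringMultipliers hF (Set.union_subset_iff.1 hcover).1

end CoveringMultipliers

/-- For an approximate subring `X` and any `x` in the subring generated by `X`,
the set `x·X` is covered by finitely many additive translates of `X`. -/
theorem approx_subring_smul_covered
    {R : Type*} [NonUnitalRing R] (X : Set R) (hX : IsApproxSubring X)
    (x : R) (hx : x ∈ NonUnitalSubring.closure X) :
    ∃ F : Set R, F.Finite ∧ (fun y => x * y) '' X ⊆ F + X :=
  NonUnitalSubring.closure_le.2 hX.subset_coveringMultipliersSubring hx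
end

section
/- Let X be an approximate subring of a ring. Then for every m ≥ 1 there exists a finite subset F_m of ⟨X⟩ such that X^m ⊆ F_m + X, where X^m denotes the set of all products of m elements of X. -/
open Pointwise

/-!
Call `S` covered by `X` if `S ⊆ F + X` for a finite `F ⊆ ⟨X⟩`. Since `X + X` is covered,
covered sets are closed under sums, and since `-X = X` also under negation. Induction on
`a ∈ ⟨X⟩` then shows that every `a X` is covered; for `a = b c` write
`b c X ⊆ b (F + X) ⊆ b F + b X`. Finally `X^{m+1} ⊆ (F + X) X ⊆ F X + X X`, and `F X` is a
finite union of sets `f X`.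
-/

def IsCoveredBy {R : Type*} [NonUnitalRing R] (X S : Set R) : Prop :=
  ∃ F : Set R, F.Finite ∧ F ⊆ (NonUnitalSubring.closure X : Set R) ∧ S ⊆ F + X

namespace IsCoveredBy

variable {R : Type*} [NonUnitalRing R] {X S T : Set R}

theorem mono (hT : IsCoveredBy X T) (hST : S ⊆ T) : IsCoveredBy X S :=
  let ⟨F, hF, hFX, hTF⟩ := hT
  ⟨F, hF, hFX, hST.trans hTF⟩

theorem of_finite (hS : S.Finite) (hSX : S ⊆ NonUnitalSubring.closure X) (h0 : (0 : R) ∈ X) :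
    IsCoveredBy X S :=
  ⟨S, hS, hSX, fun s hs => ⟨s, hs, 0, h0, add_zero s⟩⟩

theorem self : IsCoveredBy X X :=
  ⟨{0}, Set.finite_singleton 0, by simp [zero_mem], by simp⟩

theorem add (hXX : IsCoveredBy X (X + X)) (hS : IsCoveredBy X S) (hT : IsCoveredBy X T) :
    IsCoveredBy X (S + T) := by
  obtain ⟨F, hF, hFX, hSF⟩ := hS
  obtain ⟨G, hG, hGX, hTG⟩ := hT
  obtain ⟨H, hH, hHX, hXXH⟩ := hXX
  refine ⟨F + G + H, (hF.add hG).add hH, ?_, ?_⟩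
  · rintro _ ⟨_, ⟨f, hf, g, hg, rfl⟩, h, hh, rfl⟩
    exact add_mem (add_mem (hFX hf) (hGX hg)) (hHX hh)
  · calc S + T ⊆ F + X + (G + X) := Set.add_subset_add hSF hTG
      _ = F + G + (X + X) := add_add_add_comm _ _ _ _
      _ ⊆ F + G + (H + X) := Set.add_subset_add_left hXXH
      _ = F + G + H + X := (add_assoc _ _ _).symm

theorem neg (hX : -X = X) (hS : IsCoveredBy X S) : IsCoveredBy X (-S) := by
  obtain ⟨F, hF, hFX, hSF⟩ := hS
  refine ⟨-F, hF.neg, fun f hf => by simpa using neg_mem (hFX hf), ?_⟩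
  calc -S ⊆ -(F + X) := Set.neg_subset_neg.mpr hSF
    _ = -F + X := by rw [neg_add, hX]

theorem union (hS : IsCoveredBy X S) (hT : IsCoveredBy X T) : IsCoveredBy X (S ∪ T) := by
  obtain ⟨F, hF, hFX, hSF⟩ := hS
  obtain ⟨G, hG, hGX, hTG⟩ := hT
  refine ⟨F ∪ G, hF.union hG, Set.union_subset hFX hGX, ?_⟩
  rw [Set.union_add]
  exact Set.union_subset_union hSF hTG

end IsCoveredBy

section ApproxSubring

variable {R : Type*} [NonUnitalRing R] {X : Set R}

theorem IsApproxSubring.isCoveredBy_mul (hX : IsApproxSubring X) : IsCoveredBy X (X * X) :=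
  let ⟨_, F, hF, hFX, hcov⟩ := hX
  ⟨F, hF, hFX, Set.subset_union_left.trans hcov⟩

theorem IsApproxSubring.isCoveredBy_add (hX : IsApproxSubring X) : IsCoveredBy X (X + X) :=
  let ⟨_, F, hF, hFX, hcov⟩ := hX
  ⟨F, hF, hFX, Set.subset_union_right.trans hcov⟩

theorem IsApproxSubring.isCoveredBy_singleton_mul (hX : IsApproxSubring X) {a : R}
    (ha : a ∈ NonUnitalSubring.closure X) : IsCoveredBy X ({a} * X) := by
  have h0 := hX.1.1
  induction ha using NonUnitalSubring.closure_induction with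
  | mem b hb => exact hX.isCoveredBy_mul.mono (Set.mul_subset_mul_right (by simpa using hb))
  | zero => exact IsCoveredBy.self.mono (by simp [h0])
  | add b c _ _ hb hc =>
    refine (hX.isCoveredBy_add.add hb hc).mono ?_
    rw [← Set.singleton_add_singleton]
    exact Set.add_mul_subset _ _ _
  | neg b _ hb =>
    rw [← Set.neg_singleton, neg_mul]
    exact hb.neg hX.1.2
  | mul b c hb _ ihb ihc =>
    obtain ⟨F, hF, hFX, hcF⟩ := ihc
    have hbF : IsCoveredBy X ({b} * F) :=
      .of_finite ((Set.finite_singleton b).mul hF) (by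
        rintro _ ⟨_, rfl, f, hf, rfl⟩
        exact mul_mem hb (hFX hf)) h0
    refine (hX.isCoveredBy_add.add hbF ihb).mono ?_
    calc {b * c} * X = {b} * ({c} * X) := by rw [← Set.singleton_mul_singleton, mul_assoc]
      _ ⊆ {b} * (F + X) := Set.mul_subset_mul_left hcF
      _ ⊆ {b} * F + {b} * X := Set.mul_add_subset _ _ _

theorem IsApproxSubring.isCoveredBy_mul_of_finite (hX : IsApproxSubring X) {F : Set R}
    (hF : F.Finite) (hFX : F ⊆ NonUnitalSubring.closure X) : IsCoveredBy X (F * X) := by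
  induction F, hF using Set.Finite.induction_on with
  | empty => exact ⟨∅, Set.finite_empty, Set.empty_subset _, by simp⟩
  | @insert a F _ _ ih =>
    rw [Set.insert_subset_iff] at hFX
    rw [Set.insert_eq, Set.union_mul]
    exact (hX.isCoveredBy_singleton_mul hFX.1).union (ih hFX.2)

end ApproxSubring

/-- For an approximate subring `X` and every `m ≥ 1`, there is a finite subset `F`
of the subring generated by `X` such that `X^m ⊆ F + X`.
(Here `prodPow X m` is the set of products of `m+1` elements of `X`, so this covers
all powers `X^m` with `m ≥ 1`.) -/
theorem approx_subring_pow_covered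
    {R : Type*} [NonUnitalRing R] (X : Set R) (hX : IsApproxSubring X) (m : ℕ) :
    ∃ F : Set R, F.Finite ∧ F ⊆ (NonUnitalSubring.closure X : Set R) ∧
      prodPow X m ⊆ F + X := by
  induction m with
  | zero => exact IsCoveredBy.self
  | succ n ih =>
    obtain ⟨F, hF, hFX, hpow⟩ := ih
    refine (hX.isCoveredBy_add.add (hX.isCoveredBy_mul_of_finite hF hFX)
      hX.isCoveredBy_mul).mono ?_
    calc prodPow X (n + 1) ⊆ (F + X) * X := Set.mul_subset_mul_right hpow
      _ ⊆ F * X + X * X := Set.add_mul_subset _ _ _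
end

section
/- Let X be an approximate subring of a ring. Then any additively symmetric subset Y of the subring ⟨X⟩ generated by X which is additively commensurable with X is itself an approximate subring. -/
open Pointwise

/-- Two subsets of a ring are additively commensurable if each is covered by finitely
many additive translates of the other. -/
def AddCommensurable {R : Type*} [NonUnitalRing R] (Y Z : Set R) : Prop :=
  (∃ F : Set R, F.Finite ∧ Y ⊆ F + Z) ∧ (∃ F : Set R, F.Finite ∧ Z ⊆ F + Y)

/-!
For `g` in the subring `⟨X⟩`, both `g·X` and `X·g` are covered by finitely many translates of `X`:
induct on `g`, using that `X·X` and `X+X` are, and `g·(F + X) ⊆ g·F + g·X`. Writing `Y ⊆ F + X`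
with `F ⊆ ⟨X⟩` finite, `Y·Y ⊆ F·F + F·X + X·F + X·X` and `Y + Y` are then covered by finitely many
translates of `X`, hence of `Y`. Finally, a translator `f` with `(f + B) ∩ A ≠ ∅` lies in any
additive subgroup containing `A` and `B`, so the translators may be taken in `⟨Y⟩`.
-/

def AddCoveredBy {α : Type*} [Add α] (A B : Set α) : Prop :=
  ∃ F : Set α, F.Finite ∧ A ⊆ F + B

namespace AddCoveredBy

variable {α : Type*}

section Add

variable [Add α] {A A' B : Set α}

theorem mono_left (hA : A ⊆ A') (h : AddCoveredBy A' B) : AddCoveredBy A B :=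
  let ⟨F, hF, hA'F⟩ := h
  ⟨F, hF, hA.trans hA'F⟩

theorem union {C : Set α} (hA : AddCoveredBy A C) (hB : AddCoveredBy B C) :
    AddCoveredBy (A ∪ B) C :=
  let ⟨F, hF, hAF⟩ := hA
  let ⟨G, hG, hBG⟩ := hB
  ⟨F ∪ G, hF.union hG, Set.union_subset (hAF.trans (Set.add_subset_add_right Set.subset_union_left))
    (hBG.trans (Set.add_subset_add_right Set.subset_union_right))⟩

theorem biUnion {ι : Type*} {s : Set ι} (hs : s.Finite) {A : ι → Set α}
    (h : ∀ i ∈ s, AddCoveredBy (A i) B) : AddCoveredBy (⋃ i ∈ s, A i) B := by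
  choose! F hF hAF using h
  exact ⟨⋃ i ∈ s, F i, hs.biUnion hF, Set.iUnion₂_subset fun i hi =>
    (hAF i hi).trans (Set.add_subset_add_right (Set.subset_biUnion_of_mem hi))⟩

end Add

theorem of_subset [AddZeroClass α] {A B : Set α} (h : A ⊆ B) : AddCoveredBy A B :=
  ⟨{0}, Set.finite_singleton 0, by rwa [Set.singleton_zero, zero_add]⟩

theorem of_finite [AddZeroClass α] {A B : Set α} (hB : (0 : α) ∈ B) (hA : A.Finite) :
    AddCoveredBy A B :=
  ⟨A, hA, fun a ha => ⟨a, ha, 0, hB, add_zero a⟩⟩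

theorem trans [AddSemigroup α] {A B C : Set α} (hAB : AddCoveredBy A B) (hBC : AddCoveredBy B C) :
    AddCoveredBy A C :=
  let ⟨F, hF, hAF⟩ := hAB
  let ⟨G, hG, hBG⟩ := hBC
  ⟨F + G, hF.add hG, hAF.trans (add_assoc F G C ▸ Set.add_subset_add_left hBG)⟩

theorem finite_add [AddSemigroup α] {F A B : Set α} (hF : F.Finite) (h : AddCoveredBy A B) :
    AddCoveredBy (F + A) B :=
  let ⟨G, hG, hAG⟩ := h
  ⟨F + G, hF.add hG, add_assoc F G B ▸ Set.add_subset_add_left hAG⟩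

theorem add [AddCommSemigroup α] {A B C D : Set α} (hAC : AddCoveredBy A C)
    (hBD : AddCoveredBy B D) : AddCoveredBy (A + B) (C + D) :=
  let ⟨F, hF, hAF⟩ := hAC
  let ⟨G, hG, hBG⟩ := hBD
  ⟨F + G, hF.add hG, (Set.add_subset_add hAF hBG).trans (add_add_add_comm F C G D).le⟩

theorem neg [AddCommGroup α] {A B : Set α} (h : AddCoveredBy A B) : AddCoveredBy (-A) (-B) :=
  let ⟨F, hF, hAF⟩ := h
  ⟨-F, hF.neg, (Set.neg_subset_neg.2 hAF).trans (neg_add F B).le⟩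

theorem exists_finite_subset_addSubgroup [AddGroup α] {A B : Set α} (h : AddCoveredBy A B)
    (S : AddSubgroup α) (hA : A ⊆ S) (hB : B ⊆ S) :
    ∃ F : Set α, F.Finite ∧ F ⊆ S ∧ A ⊆ F + B := by
  obtain ⟨F, hF, hAF⟩ := h
  refine ⟨F ∩ S, hF.inter_of_left _, Set.inter_subset_right, fun a ha => ?_⟩
  obtain ⟨f, hf, b, hb, rfl⟩ := hAF ha
  have hfS : f ∈ S := by simpa using S.sub_mem (hA ha) (hB hb)
  exact ⟨f, ⟨hf, hfS⟩, b, hb, rfl⟩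

end AddCoveredBy

section Ring

variable {R : Type*} [NonUnitalRing R] {X : Set R}

theorem isApproxSubring_iff :
    IsApproxSubring X ↔ AddSymmetric X ∧ AddCoveredBy (X * X) X ∧ AddCoveredBy (X + X) X := by
  constructor
  · rintro ⟨hX, F, hF, -, hcov⟩
    exact ⟨hX, ⟨F, hF, Set.subset_union_left.trans hcov⟩,
      ⟨F, hF, Set.subset_union_right.trans hcov⟩⟩
  · rintro ⟨hX, hmul, hadd⟩
    have hsub : X * X ∪ (X + X) ⊆ (NonUnitalSubring.closure X : Set R) := by
      rintro _ (⟨a, ha, b, hb, rfl⟩ | ⟨a, ha, b, hb, rfl⟩)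
      · exact mul_mem (NonUnitalSubring.subset_closure ha) (NonUnitalSubring.subset_closure hb)
      · exact add_mem (NonUnitalSubring.subset_closure ha) (NonUnitalSubring.subset_closure hb)
    exact ⟨hX, (hmul.union hadd).exists_finite_subset_addSubgroup
      (NonUnitalSubring.closure X).toAddSubgroup hsub NonUnitalSubring.subset_closure⟩

theorem addCoveredBy_singleton_mul (hX : AddSymmetric X) (hmul : AddCoveredBy (X * X) X)
    (hadd : AddCoveredBy (X + X) X) {g : R} (hg : g ∈ NonUnitalSubring.closure X) :
    AddCoveredBy ({g} * X) X := by
  induction hg using NonUnitalSubring.closure_induction with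
  | mem x hx => exact hmul.mono_left (Set.mul_subset_mul_right (Set.singleton_subset_iff.2 hx))
  | zero =>
    refine AddCoveredBy.of_subset ?_
    rintro _ ⟨_, rfl, x, -, rfl⟩
    simpa using hX.1
  | add g h _ _ ihg ihh =>
    refine ((ihg.add ihh).trans hadd).mono_left ?_
    rintro _ ⟨_, rfl, x, hx, rfl⟩
    exact ⟨g * x, ⟨g, rfl, x, hx, rfl⟩, h * x, ⟨h, rfl, x, hx, rfl⟩, (add_mul g h x).symm⟩
  | neg g _ ihg =>
    simpa [← Set.neg_singleton, neg_mul, hX.2] using ihg.neg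
  | mul g h _ _ ihg ihh =>
    obtain ⟨F, hF, hhF⟩ := ihh
    refine (ihg.finite_add ((Set.finite_singleton g).mul hF)).mono_left ?_
    calc {g * h} * X = {g} * ({h} * X) := by
          rw [← Set.singleton_mul_singleton, mul_assoc]
      _ ⊆ {g} * (F + X) := Set.mul_subset_mul_left hhF
      _ ⊆ {g} * F + {g} * X := Set.mul_add_subset _ _ _

theorem addCoveredBy_mul_singleton (hX : AddSymmetric X) (hmul : AddCoveredBy (X * X) X)
    (hadd : AddCoveredBy (X + X) X) {g : R} (hg : g ∈ NonUnitalSubring.closure X) :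
    AddCoveredBy (X * {g}) X := by
  induction hg using NonUnitalSubring.closure_induction with
  | mem x hx => exact hmul.mono_left (Set.mul_subset_mul_left (Set.singleton_subset_iff.2 hx))
  | zero =>
    refine AddCoveredBy.of_subset ?_
    rintro _ ⟨x, -, _, rfl, rfl⟩
    simpa using hX.1
  | add g h _ _ ihg ihh =>
    refine ((ihg.add ihh).trans hadd).mono_left ?_
    rintro _ ⟨x, hx, _, rfl, rfl⟩
    exact ⟨x * g, ⟨x, hx, g, rfl, rfl⟩, x * h, ⟨x, hx, h, rfl, rfl⟩, (mul_add x g h).symm⟩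
  | neg g _ ihg =>
    simpa [← Set.neg_singleton, mul_neg, hX.2] using ihg.neg
  | mul g h _ _ ihg ihh =>
    obtain ⟨F, hF, hgF⟩ := ihg
    refine (ihh.finite_add (hF.mul (Set.finite_singleton h))).mono_left ?_
    calc X * {g * h} = X * {g} * {h} := by
          rw [← Set.singleton_mul_singleton, mul_assoc]
      _ ⊆ (F + X) * {h} := Set.mul_subset_mul_right hgF
      _ ⊆ F * {h} + X * {h} := Set.add_mul_subset _ _ _

theorem addCoveredBy_finite_mul (hX : AddSymmetric X) (hmul : AddCoveredBy (X * X) X)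
    (hadd : AddCoveredBy (X + X) X) {F : Set R} (hF : F.Finite)
    (hFX : F ⊆ NonUnitalSubring.closure X) : AddCoveredBy (F * X) X := by
  rw [← Set.iUnion_mul_left_image]
  refine AddCoveredBy.biUnion hF fun g hg => ?_
  simpa only [Set.singleton_mul] using addCoveredBy_singleton_mul hX hmul hadd (hFX hg)

theorem addCoveredBy_mul_finite (hX : AddSymmetric X) (hmul : AddCoveredBy (X * X) X)
    (hadd : AddCoveredBy (X + X) X) {F : Set R} (hF : F.Finite)
    (hFX : F ⊆ NonUnitalSubring.closure X) : AddCoveredBy (X * F) X := by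
  rw [← Set.iUnion_mul_right_image]
  refine AddCoveredBy.biUnion hF fun g hg => ?_
  simpa only [Set.mul_singleton] using addCoveredBy_mul_singleton hX hmul hadd (hFX hg)

theorem addCoveredBy_finite_add_mul_finite_add (hX : AddSymmetric X)
    (hmul : AddCoveredBy (X * X) X) (hadd : AddCoveredBy (X + X) X) {F : Set R} (hF : F.Finite)
    (hFX : F ⊆ NonUnitalSubring.closure X) : AddCoveredBy ((F + X) * (F + X)) X := by
  have hsum {A B : Set R} (hA : AddCoveredBy A X) (hB : AddCoveredBy B X) :
      AddCoveredBy (A + B) X :=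
    (hA.add hB).trans hadd
  refine (hsum (hsum (AddCoveredBy.of_finite hX.1 (hF.mul hF))
      (addCoveredBy_finite_mul hX hmul hadd hF hFX))
    (hsum (addCoveredBy_mul_finite hX hmul hadd hF hFX) hmul)).mono_left ?_
  exact (Set.add_mul_subset _ _ _).trans
    (Set.add_subset_add (Set.mul_add_subset _ _ _) (Set.mul_add_subset _ _ _))

end Ring

/-- If `X` is an approximate subring, then any additively symmetric subset `Y` of the
subring generated by `X` which is additively commensurable with `X` is itself an
approximate subring. -/
theorem approx_subring_of_commensurable
    {R : Type*} [NonUnitalRing R] (X Y : Set R) (hX : IsApproxSubring X)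
    (hYsub : Y ⊆ (NonUnitalSubring.closure X : Set R)) (hYsym : AddSymmetric Y)
    (hcom : AddCommensurable Y X) :
    IsApproxSubring Y := by
  obtain ⟨hXsym, hXmul, hXadd⟩ := isApproxSubring_iff.1 hX
  obtain ⟨hYX, hXY⟩ : AddCoveredBy Y X ∧ AddCoveredBy X Y := hcom
  obtain ⟨F, hF, hFX, hYF⟩ := hYX.exists_finite_subset_addSubgroup
    (NonUnitalSubring.closure X).toAddSubgroup hYsub NonUnitalSubring.subset_closure
  have hYmul : AddCoveredBy (Y * Y) X :=
    (addCoveredBy_finite_add_mul_finite_add hXsym hXmul hXadd hF hFX).mono_left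
      (Set.mul_subset_mul hYF hYF)
  exact isApproxSubring_iff.2 ⟨hYsym, hYmul.trans hXY, ((hYX.add hYX).trans hXadd).trans hXY⟩
end

section
/- Let K ⊆ L be a proper field extension with K an infinite field, and let t ∈ L \ K. Then the set Y := (t + K) ∪ {0} ∪ (−t + K) is additively symmetric and additively commensurable with K, but Y is not an approximate subring of L. -/
/-!
For `k ∈ K` the products `t * (t + k)` lie in `Y * Y`, and they lie in pairwise distinct cosets of
`K`, since `t * (t + k) - t * (t + k') = t * (k - k')` and `t ∉ K`. As `K` is infinite, `Y * Y`
meets infinitely many cosets of `K`, whereas `F + Y` is covered by finitely many of them for every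
finite `F`, because `Y` is.
-/

open Pointwise

theorem Set.Finite.of_subset_add_addSubgroup {G : Type*} [AddCommGroup G] {H : AddSubgroup G}
    {F S : Set G} (hF : F.Finite) (hSF : S ⊆ F + H)
    (hS : ∀ x ∈ S, ∀ y ∈ S, x - y ∈ H → x = y) : S.Finite := by
  let π : G → G ⧸ H := QuotientAddGroup.mk
  refine Set.Finite.of_injOn (f := π) ?_ ?_ (hF.image π)
  · intro x hx
    obtain ⟨f, hf, h, hh, rfl⟩ := hSF hx
    exact ⟨f, hf, QuotientAddGroup.eq.2 (by simpa using hh)⟩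
  · intro x hx y hy hxy
    refine hS x hx y hy ?_
    simpa [neg_add_eq_sub] using H.neg_mem (QuotientAddGroup.eq.1 hxy)

theorem Subfield.mul_mem_cancel_right {L : Type*} [DivisionRing L] {K : Subfield L} {a t : L}
    (ha : a ∈ K) (ha0 : a ≠ 0) : t * a ∈ K ↔ t ∈ K := by
  refine ⟨fun h => ?_, fun h => K.mul_mem h ha⟩
  simpa [ha0] using K.mul_mem h (K.inv_mem ha)

theorem not_isApproxSubring_of_translate_subset {L : Type*} [DivisionRing L] (K : Subfield L)
    [Infinite K] {t : L} (ht : t ∉ K) {Y F₀ : Set L} (hF₀ : F₀.Finite)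
    (htY : {t} + (K : Set L) ⊆ Y) (hYF₀ : Y ⊆ F₀ + K) : ¬ IsApproxSubring Y := by
  rintro ⟨-, F, hF, -, hcover⟩
  have ht0 : t ≠ 0 := fun h => ht (h ▸ K.zero_mem)
  have hmem : ∀ k ∈ K, t + k ∈ Y := fun k hk => htY ⟨t, rfl, k, hk, rfl⟩
  set S := (fun k => t * (t + k)) '' (K : Set L)
  have hS_sub : S ⊆ (F + F₀) + K := by
    rintro _ ⟨k, hk, rfl⟩
    have : t * (t + k) ∈ F + Y :=
      hcover (.inl (Set.mul_mem_mul (by simpa using hmem 0 K.zero_mem) (hmem k hk)))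
    rw [add_assoc]
    exact Set.add_subset_add_left hYF₀ this
  have hS_fin : S.Finite := by
    refine (hF.add hF₀).of_subset_add_addSubgroup (H := K.toAddSubgroup) hS_sub ?_
    rintro _ ⟨k, hk, rfl⟩ _ ⟨k', hk', rfl⟩ hdiff
    by_contra hne
    have hkk' : k - k' ≠ 0 := sub_ne_zero.2 fun h => hne (by rw [h])
    refine ht ((Subfield.mul_mem_cancel_right (K.sub_mem hk hk') hkk').1 ?_)
    simpa [← mul_sub] using hdiff
  exact (Set.infinite_coe_iff.1 ‹Infinite K›).image
    (fun a _ b _ h => by simpa [ht0] using h) hS_fin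

/-- If `K ⊆ L` is a proper field extension with `K` infinite and `t ∈ L \ K`, then
`Y := (t + K) ∪ {0} ∪ (-t + K)` is additively symmetric and additively commensurable
with `K`, but is not an approximate subring of `L`. -/
theorem not_approx_subring_of_translate_union
    {L : Type*} [Field L] (K : Subfield L) [Infinite K] (t : L) (ht : t ∉ K)
    (Y : Set L) (hY : Y = ({t} + (K : Set L)) ∪ {0} ∪ ({-t} + (K : Set L))) :
    AddSymmetric Y ∧ AddCommensurable Y (K : Set L) ∧ ¬ IsApproxSubring Y := by
  subst hY
  have hK_translate : {-t} + ({t} + (K : Set L)) = K := by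
    rw [← add_assoc, Set.singleton_add_singleton, neg_add_cancel, Set.singleton_add]
    simp
  have hY_cover : ({t} + (K : Set L)) ∪ {0} ∪ ({-t} + (K : Set L)) ⊆ {t, 0, -t} + K := by
    refine Set.union_subset (Set.union_subset (Set.add_subset_add_right (by simp)) ?_)
      (Set.add_subset_add_right (by simp))
    exact Set.singleton_subset_iff.2 (zero_add (0 : L) ▸ Set.add_mem_add (by simp) K.zero_mem)
  have htY : {t} + (K : Set L) ⊆ ({t} + (K : Set L)) ∪ {0} ∪ ({-t} + (K : Set L)) :=
    Set.subset_union_left.trans Set.subset_union_left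
  refine ⟨⟨.inl (.inr rfl), ?_⟩, ⟨⟨{t, 0, -t}, by simp, hY_cover⟩, ⟨{-t}, by simp, ?_⟩⟩,
    not_isApproxSubring_of_translate_subset K ht (by simp) htY hY_cover⟩
  · simp only [Set.union_neg, neg_add_rev, neg_coe_set, Set.neg_singleton, neg_neg, neg_zero,
      add_comm _ (K : Set L)]
    ext; simp only [Set.mem_union]; tauto
  · exact hK_translate.symm.subset.trans (Set.add_subset_add_left htY)
end

section
/- Let X be an approximate subgroup of a group, G := ⟨X⟩ the subgroup it generates, and let f : G → S be a locally compact model of X, i.e. a group homomorphism to a locally compact Hausdorff topological group S such that f[X] has compact closure in S and there exist a neighborhood V of the identity in S and m ∈ ℕ with f⁻¹[V] ⊆ X^m. Then for every neighborhood U of the identity in S, the set f⁻¹[U] is generic, i.e. finitely many left translates of f⁻¹[U] cover X. -/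
open Pointwise

/-- A subset of a group is symmetric if it contains the identity and `X⁻¹ = X`. -/
def SymmetricSubset {G : Type*} [Group G] (X : Set G) : Prop :=
  (1 : G) ∈ X ∧ X⁻¹ = X

/-- `X` is an approximate subgroup if it is symmetric and `X·X ⊆ F·X` for some finite
subset `F` of the subgroup generated by `X`. -/
def IsApproxSubgroup {G : Type*} [Group G] (X : Set G) : Prop :=
  SymmetricSubset X ∧ ∃ F : Set G, F.Finite ∧ F ⊆ (Subgroup.closure X : Set G) ∧
    X * X ⊆ F * X

/-! If `W` is a symmetric open neighbourhood of `1`, then `closure A ⊆ A * W`, so a set `A` with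
compact closure is covered by finitely many translates `a • W` with `a ∈ A`. For `A = f '' X`
these centres are images `f g` with `g ∈ X`, and pulling the cover back along `f` covers `X` by
the translates `g • f ⁻¹' U`. -/

open Topology

theorem exists_finite_subset_subset_mul_of_isCompact_closure {S : Type*} [Group S]
    [TopologicalSpace S] [IsTopologicalGroup S] {A U : Set S} (hA : IsCompact (closure A))
    (hU : U ∈ 𝓝 1) : ∃ T ⊆ A, T.Finite ∧ A ⊆ T * U := by
  set W := interior U ∩ (interior U)⁻¹
  have hW_open : IsOpen W := isOpen_interior.inter isOpen_interior.inv
  have hW_nhds : W ∈ 𝓝 1 := hW_open.mem_nhds ⟨mem_interior_iff_mem_nhds.2 hU,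
    by simpa using mem_interior_iff_mem_nhds.2 hU⟩
  have hcover : closure A ⊆ ⋃ a ∈ A, a • W := by
    rw [Set.iUnion_smul_left_image]
    exact closure_subset_mul_right_of_mem_nhds_one_of_inv A hW_nhds
      fun x hx => ⟨hx.2, by simpa using hx.1⟩
  obtain ⟨T, hTA, hT, hAT⟩ :=
    hA.elim_finite_subcover_image (fun a _ => hW_open.smul a) hcover
  refine ⟨T, hTA, hT, subset_closure.trans <| hAT.trans ?_⟩
  rw [Set.iUnion_smul_left_image]
  exact Set.mul_subset_mul_left (Set.inter_subset_left.trans interior_subset)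

theorem MonoidHom.preimage_image_mul_subset {G S : Type*} [Group G] [Group S] (f : G →* S)
    (F : Set G) (U : Set S) : f ⁻¹' (f '' F * U) ⊆ F * f ⁻¹' U := by
  rintro x ⟨_, ⟨g, hg, rfl⟩, u, hu, hx⟩
  refine ⟨g, hg, g⁻¹ * x, ?_, mul_inv_cancel_left g x⟩
  simpa [← hx] using hu

theorem locally_compact_model_preimage_generic_general
    {G S : Type*} [Group G] [Group S] [TopologicalSpace S] [IsTopologicalGroup S]
    (X : Set G)
    (f : G →* S) (hcomp : IsCompact (closure (⇑f '' X)))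
    (U : Set S) (hU : U ∈ nhds (1 : S)) :
    ∃ F : Set G, F.Finite ∧ X ⊆ F * (⇑f ⁻¹' U) := by
  obtain ⟨F, -, hF, hXF⟩ := Set.exists_subset_image_finite_and.1
    (exists_finite_subset_subset_mul_of_isCompact_closure hcomp hU)
  exact ⟨F, hF, (Set.subset_preimage_image f X).trans <|
    (Set.preimage_mono hXF).trans (f.preimage_image_mul_subset F U)⟩

/-- Let `X` be an approximate subgroup generating the group `G`, and let `f : G →* S`
be a locally compact model of `X`. Then for every neighborhood `U` of the identity
in `S`, the set `f⁻¹[U]` is generic: finitely many left translates of it cover `X`. -/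
theorem locally_compact_model_preimage_generic
    {G S : Type*} [Group G] [Group S] [TopologicalSpace S] [IsTopologicalGroup S]
    [LocallyCompactSpace S] [T2Space S]
    (X : Set G) (hX : IsApproxSubgroup X) (hgen : Subgroup.closure X = ⊤)
    (f : G →* S) (hcomp : IsCompact (closure (⇑f '' X)))
    (hmodel : ∃ V ∈ nhds (1 : S), ∃ m : ℕ, ⇑f ⁻¹' V ⊆ X ^ m)
    (U : Set S) (hU : U ∈ nhds (1 : S)) :
    ∃ F : Set G, F.Finite ∧ X ⊆ F * (⇑f ⁻¹' U) :=
  locally_compact_model_preimage_generic_general X f hcomp U hU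
end

section
/- Let X be a symmetric subset of a group (not assumed to be an approximate subgroup), and suppose there exists a group homomorphism f : ⟨X⟩ → S to a locally compact Hausdorff topological group S such that f[X] has compact closure in S and there exist a neighborhood U of the identity in S and m ∈ ℕ with f⁻¹[U] ⊆ X^m. Then X^m is an approximate subgroup for some m; in fact, for the m in the hypothesis, X^{2m} is covered by finitely many left translates of X^m. -/
/-!
Cover the compact closure of `f[X^{2m}]` by finitely many translates `f(a) W`, `a ∈ X^{2m}`,
of a symmetric identity neighbourhood `W ⊆ U`. If `f(x) ∈ f(a) W`, then `f(a⁻¹ x) ∈ W ⊆ U`,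
so `a⁻¹ x ∈ X^m`; hence `X^{2m} = X^m X^m` lies in finitely many left translates of `X^m`.
-/

open Pointwise

open Filter Topology

theorem SymmetricSubset.pow {G : Type*} [Group G] {X : Set G} (hX : SymmetricSubset X)
    (n : ℕ) : SymmetricSubset (X ^ n) :=
  ⟨Set.one_mem_pow hX.1, by rw [← inv_pow, hX.2]⟩

theorem IsCompact.pow {M : Type*} [Monoid M] [TopologicalSpace M] [ContinuousMul M]
    {K : Set M} (hK : IsCompact K) : ∀ n : ℕ, IsCompact (K ^ n)
  | 0 => by rw [pow_zero]; exact isCompact_singleton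
  | n + 1 => by simpa only [pow_succ] using (hK.pow n).mul hK

theorem IsCompact.closure_pow {M : Type*} [Monoid M] [TopologicalSpace M] [ContinuousMul M]
    [R1Space M] {B : Set M} (hB : IsCompact (closure B)) (n : ℕ) :
    IsCompact (closure (B ^ n)) :=
  (hB.pow n).closure.of_isClosed_subset isClosed_closure
    (closure_mono (Set.pow_subset_pow_left subset_closure))

section IsTopologicalGroup

variable {S : Type*} [Group S] [TopologicalSpace S] [IsTopologicalGroup S]

theorem exists_finite_subset_closure_subset_mul_of_mem_nhds_one {B V : Set S}
    (hB : IsCompact (closure B)) (hV : V ∈ 𝓝 1) :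
    ∃ F ⊆ B, F.Finite ∧ closure B ⊆ F * V := by
  set W := interior V ∩ (interior V)⁻¹
  have hV' : interior V ∈ 𝓝 1 := interior_mem_nhds.2 hV
  have hW : W ∈ 𝓝 1 := inter_mem hV' (inv_mem_nhds_one S hV')
  have hW_symm : ∀ x ∈ W, x⁻¹ ∈ W := fun x hx => ⟨hx.2, by simpa using hx.1⟩
  have hWV : W ⊆ V := Set.inter_subset_left.trans interior_subset
  have hBW : closure B ⊆ ⋃ b ∈ B, (b * ·) '' W := by
    rw [Set.iUnion_mul_left_image]
    exact closure_subset_mul_right_of_mem_nhds_one_of_inv B hW hW_symm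
  obtain ⟨F, hFB, hF, hcover⟩ := hB.elim_finite_subcover_image
    (fun b _ => (isOpenMap_mul_left b) _ (isOpen_interior.inter isOpen_interior.inv)) hBW
  refine ⟨F, hFB, hF, hcover.trans ?_⟩
  rw [Set.iUnion_mul_left_image]
  exact Set.mul_subset_mul_left hWV

theorem MonoidHom.exists_finite_subset_subset_mul_preimage {G : Type*} [Group G] (f : G →* S)
    {A : Set G} {V : Set S} (hA : IsCompact (closure (f '' A))) (hV : V ∈ 𝓝 1) :
    ∃ F ⊆ A, F.Finite ∧ A ⊆ F * f ⁻¹' V := by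
  obtain ⟨F, hFA, hF, hcover⟩ := Set.exists_subset_image_finite_and.1
    (exists_finite_subset_closure_subset_mul_of_mem_nhds_one hA hV)
  refine ⟨F, hFA, hF, fun x hx => ?_⟩
  obtain ⟨_, ⟨a, ha, rfl⟩, v, hv, hfx⟩ := hcover (subset_closure ⟨x, hx, rfl⟩)
  refine ⟨a, ha, a⁻¹ * x, ?_, mul_inv_cancel_left a x⟩
  simpa [← hfx] using hv

end IsTopologicalGroup

theorem pow_approx_subgroup_of_locally_compact_model_general
    {G S : Type*} [Group G] [Group S] [TopologicalSpace S] [IsTopologicalGroup S]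
    (X : Set G) (hsym : SymmetricSubset X)
    (f : G →* S) (hcomp : IsCompact (closure (⇑f '' X)))
    (U : Set S) (hU : U ∈ nhds (1 : S)) (m : ℕ) (hm : ⇑f ⁻¹' U ⊆ X ^ m) :
    IsApproxSubgroup (X ^ m) ∧ ∃ F : Set G, F.Finite ∧ X ^ (2 * m) ⊆ F * X ^ m := by
  have h2m : X ^ (2 * m) = X ^ m * X ^ m := by rw [two_mul, pow_add]
  have hA : IsCompact (closure (f '' X ^ (2 * m))) := by
    simpa only [Set.image_pow] using hcomp.closure_pow (2 * m)
  obtain ⟨F, hFA, hF, hcover⟩ := f.exists_finite_subset_subset_mul_preimage hA hU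
  have hcover' : X ^ (2 * m) ⊆ F * X ^ m := hcover.trans (Set.mul_subset_mul_left hm)
  have hF_closure : F ⊆ Subgroup.closure (X ^ m) :=
    hFA.trans (h2m ▸ Subgroup.mul_subset Subgroup.subset_closure Subgroup.subset_closure)
  exact ⟨⟨hsym.pow m, F, hF, hF_closure, h2m ▸ hcover'⟩, F, hF, hcover'⟩

/-- Let `X` be a symmetric subset of a group `G` generated by `X` (not assumed to be an
approximate subgroup), and suppose there is a homomorphism `f : G →* S` to a locally
compact Hausdorff group such that `f[X]` has compact closure and `f⁻¹[U] ⊆ X^m` for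
some neighborhood `U` of the identity and some `m`. Then `X^m` is an approximate
subgroup; in fact `X^{2m}` is covered by finitely many left translates of `X^m`. -/
theorem pow_approx_subgroup_of_locally_compact_model
    {G S : Type*} [Group G] [Group S] [TopologicalSpace S] [IsTopologicalGroup S]
    [LocallyCompactSpace S] [T2Space S]
    (X : Set G) (hsym : SymmetricSubset X) (hgen : Subgroup.closure X = ⊤)
    (f : G →* S) (hcomp : IsCompact (closure (⇑f '' X)))
    (U : Set S) (hU : U ∈ nhds (1 : S)) (m : ℕ) (hm : ⇑f ⁻¹' U ⊆ X ^ m) :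
    IsApproxSubgroup (X ^ m) ∧ ∃ F : Set G, F.Finite ∧ X ^ (2 * m) ⊆ F * X ^ m :=
  pow_approx_subgroup_of_locally_compact_model_general X hsym f hcomp U hU m hm
end

section
/- Let S be a (not necessarily unital or commutative) topological ring and let V be a compact open subgroup of the additive group of S. Then there exists a subring P of S with P ⊆ V such that P is open and compact in S. -/
/-!
Let `T` be the set of `x` with `x V ⊆ V` and `V x ⊆ V`. It is closed under multiplication, so
`V ∩ T` is a subring contained in `V`. As `V` is open and compact, the tube lemma makes `T` open,
so `V ∩ T` is an open additive subgroup, hence closed in the compact set `V`.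
-/

open Topology

namespace AddSubgroup

variable {S : Type*} [NonUnitalRing S]

def idealizer (V : AddSubgroup S) : NonUnitalSubring S where
  carrier := {x | ∀ v ∈ V, x * v ∈ V ∧ v * x ∈ V}
  zero_mem' v _ := by simp only [zero_mul, mul_zero, V.zero_mem, and_self]
  add_mem' {a b} ha hb v hv := by
    rw [add_mul, mul_add]
    exact ⟨V.add_mem (ha v hv).1 (hb v hv).1, V.add_mem (ha v hv).2 (hb v hv).2⟩
  neg_mem' {a} ha v hv := by
    rw [neg_mul, mul_neg]
    exact ⟨V.neg_mem (ha v hv).1, V.neg_mem (ha v hv).2⟩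
  mul_mem' {a b} ha hb v hv := by
    rw [mul_assoc, ← mul_assoc v]
    exact ⟨(ha _ (hb v hv).1).1, (hb _ (ha v hv).2).2⟩

theorem mem_idealizer {V : AddSubgroup S} {x : S} :
    x ∈ V.idealizer ↔ ∀ v ∈ V, x * v ∈ V ∧ v * x ∈ V :=
  Iff.rfl

def infIdealizer (V : AddSubgroup S) : NonUnitalSubring S where
  toAddSubgroup := V ⊓ V.idealizer.toAddSubgroup
  mul_mem' {_ b} ha hb := ⟨(mem_idealizer.1 ha.2 b hb.1).1, V.idealizer.mul_mem ha.2 hb.2⟩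

theorem coe_infIdealizer (V : AddSubgroup S) :
    (V.infIdealizer : Set S) = (V : Set S) ∩ V.idealizer :=
  rfl

theorem isOpen_idealizer [TopologicalSpace S] [ContinuousMul S] {V : AddSubgroup S}
    (hVc : IsCompact (V : Set S)) (hVo : IsOpen (V : Set S)) :
    IsOpen (V.idealizer : Set S) := by
  refine isOpen_iff_mem_nhds.2 fun x₀ hx₀ => ?_
  refine hVc.eventually_forall_of_forall_eventually fun v hv => ?_
  have hleft : ∀ᶠ z : S × S in 𝓝 (x₀, v), z.1 * z.2 ∈ V :=
    (continuous_mul.tendsto (x₀, v)).eventually (hVo.mem_nhds (hx₀ v hv).1)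
  have hright : ∀ᶠ z : S × S in 𝓝 (x₀, v), z.2 * z.1 ∈ V :=
    ((continuous_mul.comp continuous_swap).tendsto (x₀, v)).eventually
      (hVo.mem_nhds (hx₀ v hv).2)
  exact hleft.and hright

end AddSubgroup

/-- In a (not necessarily unital or commutative) topological ring, every compact open
additive subgroup `V` contains an open, compact subring. -/
theorem exists_compact_open_subring_of_compact_open_addSubgroup
    {S : Type*} [NonUnitalRing S] [TopologicalSpace S] [IsTopologicalRing S]
    (V : AddSubgroup S) (hVc : IsCompact (V : Set S)) (hVo : IsOpen (V : Set S)) :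
    ∃ P : NonUnitalSubring S, (P : Set S) ⊆ (V : Set S) ∧
      IsOpen (P : Set S) ∧ IsCompact (P : Set S) := by
  have hP : IsOpen (V.infIdealizer : Set S) := by
    rw [V.coe_infIdealizer]
    exact hVo.inter (AddSubgroup.isOpen_idealizer hVc hVo)
  refine ⟨V.infIdealizer, Set.inter_subset_left, hP, ?_⟩
  exact hVc.of_isClosed_subset
    (V.infIdealizer.toAddSubgroup.isClosed_of_isOpen hP) Set.inter_subset_left
end

section
/- Let X be a K-approximate subring of a ring, witnessed by a set F ⊆ ⟨X⟩ with |F| ≤ K and X·X ∪ (X+X) ⊆ F + X. Then the set 4X + X·4X is covered by at most K^11 additive translates of X, i.e. there exists F' with |F'| ≤ K^11 and 4X + X·4X ⊆ F' + X. -/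
/-!
Iterating `X + X ⊆ F + X` gives `(n + 1)X ⊆ nF + X`, and distributivity gives
`X·4X ⊆ 4(X·X) ⊆ 4(F + X) = 4F + 4X`. Hence `4X + X·4X ⊆ 4F + 8X ⊆ 4F + 7F + X = 11F + X`,
and the sumset `11F` has at most `|F|^11 ≤ K^11` elements.
-/

open Pointwise

theorem Set.succ_nsmul_subset_nsmul_add {M : Type*} [AddCommMonoid M] {X F : Set M}
    (hX : X + X ⊆ F + X) : ∀ n : ℕ, (n + 1) • X ⊆ n • F + X
  | 0 => by simp
  | n + 1 =>
    calc (n + 1 + 1) • X = (n + 1) • X + X := succ_nsmul X (n + 1)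
      _ ⊆ n • F + X + X := add_subset_add_right (succ_nsmul_subset_nsmul_add hX n)
      _ = n • F + (X + X) := add_assoc _ _ _
      _ ⊆ n • F + (F + X) := add_subset_add_left hX
      _ = (n + 1) • F + X := by rw [succ_nsmul, add_assoc]

theorem Set.mul_nsmul_subset_nsmul_mul {R : Type*} [NonUnitalNonAssocSemiring R]
    (X Y : Set R) : ∀ n : ℕ, X * n • Y ⊆ n • (X * Y)
  | 0 => by simpa using X.mul_zero_subset
  | n + 1 =>
    calc X * (n + 1) • Y = X * (n • Y + Y) := by rw [succ_nsmul]
      _ ⊆ X * n • Y + X * Y := mul_add_subset _ _ _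
      _ ⊆ n • (X * Y) + X * Y := add_subset_add_right (mul_nsmul_subset_nsmul_mul X Y n)
      _ = (n + 1) • (X * Y) := (succ_nsmul _ n).symm

theorem four_X_covered_by_K_pow_eleven_general
    {R : Type*} [NonUnitalRing R] (X : Set R)
    (K : ℕ) (F : Finset R)
    (hFcard : F.card ≤ K) (hF : X * X ∪ (X + X) ⊆ (F : Set R) + X) :
    ∃ F' : Finset R, F'.card ≤ K ^ 11 ∧
      (X + X + X + X) + X * (X + X + X + X) ⊆ (F' : Set R) + X := by
  classical
  have hmul : X * X ⊆ (F : Set R) + X := Set.subset_union_left.trans hF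
  have hadd : X + X ⊆ (F : Set R) + X := Set.subset_union_right.trans hF
  refine ⟨11 • F, Finset.card_nsmul_le.trans (Nat.pow_le_pow_left hFcard 11), ?_⟩
  have four_X : X + X + X + X = 4 • X := by abel
  rw [four_X, Finset.coe_nsmul]
  calc 4 • X + X * 4 • X ⊆ 4 • X + 4 • ((F : Set R) + X) :=
        Set.add_subset_add_left <| (Set.mul_nsmul_subset_nsmul_mul X X 4).trans
          (nsmul_le_nsmul_right hmul 4)
    _ = 4 • (F : Set R) + (7 + 1) • X := by rw [nsmul_add]; abel
    _ ⊆ 4 • (F : Set R) + (7 • (F : Set R) + X) :=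
        Set.add_subset_add_left (Set.succ_nsmul_subset_nsmul_add hadd 7)
    _ = 11 • (F : Set R) + X := by abel

/-- If `X` is a `K`-approximate subring witnessed by `F` (`|F| ≤ K`,
`X·X ∪ (X+X) ⊆ F + X`), then `4X + X·4X` is covered by at most `K^11` additive
translates of `X`. -/
theorem four_X_covered_by_K_pow_eleven
    {R : Type*} [NonUnitalRing R] (X : Set R) (hsym : AddSymmetric X)
    (K : ℕ) (F : Finset R) (hFsub : (F : Set R) ⊆ (NonUnitalSubring.closure X : Set R))
    (hFcard : F.card ≤ K) (hF : X * X ∪ (X + X) ⊆ (F : Set R) + X) :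
    ∃ F' : Finset R, F'.card ≤ K ^ 11 ∧
      (X + X + X + X) + X * (X + X + X + X) ⊆ (F' : Set R) + X :=
  four_X_covered_by_K_pow_eleven_general X K F hFcard hF
end

section
/- Let R' be a (not necessarily unital or commutative) ring, let Y be a finite additively symmetric subset of R' which is not a subring, and let c ∈ R' satisfy c·(Y·Y + (Y + Y)) ⊆ Y. Then there exists z ≠ 0 with c·z = 0; in particular, c is zero or a left zero divisor. -/
open Pointwise

/-- A subset of a ring is a subring if it contains `0` and is closed under addition,
negation, and multiplication. -/
def IsSubringSet {R : Type*} [NonUnitalRing R] (Y : Set R) : Prop :=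
  (0 : R) ∈ Y ∧ (∀ a ∈ Y, ∀ b ∈ Y, a + b ∈ Y) ∧ (∀ a ∈ Y, -a ∈ Y) ∧
    ∀ a ∈ Y, ∀ b ∈ Y, a * b ∈ Y

/-! If left multiplication by `c` is injective and `Y` is finite, it permutes `Y`; writing
elements of `Y` as `c * a'`, closure of `Y` under `+` and `*` reduces to the absorption
hypothesis `c · (Y·Y + (Y+Y)) ⊆ Y`, so `Y` would be a subring. -/

section Absorbing

variable {R : Type*} [NonUnitalRing R] {Y : Set R} {c : R}

lemma mul_mem_of_absorbing (hc : ∀ z ∈ Y * Y + (Y + Y), c * z ∈ Y)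
    {a b d e : R} (ha : a ∈ Y) (hb : b ∈ Y) (hd : d ∈ Y) (he : e ∈ Y) :
    c * (a * b + (d + e)) ∈ Y :=
  hc _ (Set.add_mem_add (Set.mul_mem_mul ha hb) (Set.add_mem_add hd he))

lemma mapsTo_mul_left_of_absorbing (h0 : (0 : R) ∈ Y)
    (hc : ∀ z ∈ Y * Y + (Y + Y), c * z ∈ Y) : Set.MapsTo (c * ·) Y Y := fun y hy => by
  simpa using mul_mem_of_absorbing hc h0 h0 hy h0

lemma isSubringSet_of_absorbing (hsym : AddSymmetric Y)
    (hc : ∀ z ∈ Y * Y + (Y + Y), c * z ∈ Y) (hsurj : Set.SurjOn (c * ·) Y Y) :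
    IsSubringSet Y := by
  obtain ⟨h0, hneg⟩ := hsym
  refine ⟨h0, ?_, ?_, ?_⟩
  · intro _ hca _ hcb
    obtain ⟨a, ha, rfl⟩ := hsurj hca
    obtain ⟨b, hb, rfl⟩ := hsurj hcb
    simpa [mul_add] using mul_mem_of_absorbing hc h0 h0 ha hb
  · intro a ha
    rw [← hneg]
    exact Set.neg_mem_neg.mpr ha
  · intro _ hca b hb
    obtain ⟨a, ha, rfl⟩ := hsurj hca
    simpa [mul_assoc] using mul_mem_of_absorbing hc ha hb h0 h0

end Absorbing

/-- If `Y` is a finite additively symmetric subset of a ring which is not a subring,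
and `c·(Y·Y + (Y+Y)) ⊆ Y`, then `c` kills some nonzero element; in particular `c` is
zero or a left zero divisor. -/
theorem left_zero_divisor_of_absorbing
    {R : Type*} [NonUnitalRing R] (Y : Set R) (hfin : Y.Finite)
    (hsym : AddSymmetric Y) (hnot : ¬ IsSubringSet Y)
    (c : R) (hc : ∀ z ∈ Y * Y + (Y + Y), c * z ∈ Y) :
    ∃ z : R, z ≠ 0 ∧ c * z = 0 := by
  by_contra! h
  have hinj : Function.Injective (AddMonoidHom.mulLeft c) :=
    (injective_iff_map_eq_zero _).2 fun z hz => by_contra fun hz0 => h z hz0 hz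
  have hbij : Set.BijOn (c * ·) Y Y :=
    (hfin.injOn_iff_bijOn_of_mapsTo (mapsTo_mul_left_of_absorbing hsym.1 hc)).1 hinj.injOn
  exact hnot (isSubringSet_of_absorbing hsym hc hbij.surjOn)
end
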